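/- The involution Phi on D_n preserves the dinv statistic: dinv(Phi(w)) = dinv(w), where dinv(w) is the number of pairs (i,j) with i < j such that eta_i = eta_j or eta_j = eta_i - 1 in the height sequence of w. -/

import Mathlib

/-- Number of occurrences of the letter `a` (encoded `true`). -/
def countA (w : List Bool) : ℕ := (w.filter (fun x => x = true)).length

/-- Number of occurrences of the letter `b` (encoded `false`). -/
def countB (w : List Bool) : ℕ := (w.filter (fun x => x = false)).length

/-- `delta w = |w|_a - |w|_b`. -/
def delta (w : List Bool) : ℤ := (countA w : ℤ) - (countB w : ℤ)

/-- `D_n`: words with `n-1` a's, `n` b's, every strict prefix with `delta ≥ 0`. -/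
def inDn (n : ℕ) (w : List Bool) : Prop :=
  countA w = n - 1 ∧ countB w = n ∧
    ∀ u v : List Bool, w = u ++ v → v ≠ [] → 0 ≤ delta u

/-- Heights of the occurrences of `a` in a word, starting from height `h`. -/
def heightsAux : List Bool → ℤ → List ℤ
  | [], _ => []
  | (true :: t), h => h :: heightsAux t (h + 1)
  | (false :: t), h => heightsAux t (h - 1)

/-- The height sequence of a word: `eta i = delta` of the prefix preceding the
`i`-th occurrence of `a`. -/
def heights (w : List Bool) : List ℤ := heightsAux w 0

/-- The `dinv` statistic: pairs `i < j` with `eta i = eta j` or `eta j = eta i - 1`. -/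
def dinv (w : List Bool) : ℕ :=
  ((Finset.range (heights w).length ×ˢ Finset.range (heights w).length).filter
    (fun p => p.1 < p.2 ∧
      ((heights w).getD p.1 0 = (heights w).getD p.2 0 ∨
        (heights w).getD p.2 0 = (heights w).getD p.1 0 - 1))).card

/-!
Reversing a word reflects its height sequence: if `u` has heights `A`, then `u.reverse` has
heights `delta u - 1 - A`, read backwards. As `delta w = -1`, the heights of `Φ(w)` are thus
`c + 1 - A` reversed followed by `c - B` reversed, where `B` are the heights of `v` inside `w`
and `c = delta u - 2`. Within one block, reflecting and reversing preserves the relation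
`η_i = η_j ∨ η_j = η_i - 1` counted by `dinv`, while for pairs across the two blocks its two
alternatives are exchanged; so each of the three parts of `dinv` is unchanged.
-/

section PairCount

variable {α : Type*} (R : α → α → Prop) [DecidableRel R]

def pairCount : List α → ℕ
  | [] => 0
  | x :: l => l.countP (R x ·) + pairCount l

def crossCount (A B : List α) : ℕ := (A.map fun a => B.countP (R a ·)).sum

variable {R}

@[simp] lemma pairCount_nil : pairCount R [] = 0 := rfl

@[simp] lemma pairCount_cons (x : α) (l : List α) :
    pairCount R (x :: l) = l.countP (R x ·) + pairCount R l := rfl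

lemma pairCount_append (A B : List α) :
    pairCount R (A ++ B) = pairCount R A + crossCount R A B + pairCount R B := by
  induction A with
  | nil => simp [crossCount]
  | cons a A ih =>
    simp only [List.cons_append, pairCount_cons, List.countP_append, ih, crossCount, List.map_cons,
      List.sum_cons]
    ring

lemma crossCount_singleton_right (A : List α) (x : α) :
    crossCount R A [x] = A.countP (R · x) := by
  induction A with
  | nil => rfl
  | cons a A ih => simp_all [crossCount, List.countP_cons, add_comm]

lemma pairCount_reverse (l : List α) : pairCount R l.reverse = pairCount (fun x y => R y x) l := by
  induction l with
  | nil => rfl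
  | cons x l ih =>
    rw [List.reverse_cons, pairCount_append, ih, crossCount_singleton_right, List.countP_reverse]
    simp only [pairCount_cons, pairCount_nil, List.countP_nil]; ring

lemma pairCount_map {β : Type*} (f : β → α) (l : List β) :
    pairCount R (l.map f) = pairCount (fun x y => R (f x) (f y)) l := by
  induction l with
  | nil => rfl
  | cons x l ih => simp [ih, List.countP_map, Function.comp_def]

lemma crossCount_reverse (A B : List α) : crossCount R A.reverse B.reverse = crossCount R A B := by
  simp [crossCount, List.sum_reverse, List.countP_reverse]

lemma crossCount_map {β : Type*} (f g : β → α) (A B : List β) :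
    crossCount R (A.map f) (B.map g) = crossCount (fun a b => R (f a) (g b)) A B := by
  simp [crossCount, List.countP_map, Function.comp_def]

lemma pairCount_congr {S : α → α → Prop} [DecidableRel S] (h : ∀ x y, R x y ↔ S x y)
    (l : List α) : pairCount R l = pairCount S l := by
  induction l with
  | nil => rfl
  | cons x l ih => simp [ih, h]

lemma crossCount_congr {S : α → α → Prop} [DecidableRel S] (h : ∀ x y, R x y ↔ S x y)
    (A B : List α) : crossCount R A B = crossCount S A B := by
  simp [crossCount, h]

lemma countP_eq_sum_range (p : α → Prop) [DecidablePred p] (l : List α) (d : α) :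
    l.countP (p ·) = ∑ j ∈ Finset.range l.length, if p (l.getD j d) then 1 else 0 := by
  induction l with
  | nil => rfl
  | cons x l ih =>
    simp only [List.countP_cons, ih, List.length_cons, Finset.sum_range_succ', List.getD_cons_succ,
      List.getD_cons_zero, decide_eq_true_eq]

lemma card_filter_lt_getD_eq_pairCount (l : List α) (d : α) :
    ((Finset.range l.length ×ˢ Finset.range l.length).filter
      (fun p => p.1 < p.2 ∧ R (l.getD p.1 d) (l.getD p.2 d))).card = pairCount R l := by
  rw [Finset.card_filter, Finset.sum_product]
  induction l with
  | nil => rfl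
  | cons x l ih =>
    simp only [List.length_cons, Finset.sum_range_succ', List.getD_cons_succ, List.getD_cons_zero,
      add_lt_add_iff_right, Nat.not_lt_zero, Nat.zero_lt_succ, true_and, false_and,
      if_false, add_zero] at ih ⊢
    rw [ih, pairCount_cons, countP_eq_sum_range _ l d, add_comm]

end PairCount

@[simp] lemma delta_nil : delta [] = 0 := rfl

lemma delta_append (x y : List Bool) : delta (x ++ y) = delta x + delta y := by
  simp only [delta, countA, countB, List.filter_append, List.length_append, Nat.cast_add]
  ring

@[simp] lemma delta_cons_true (w : List Bool) : delta (true :: w) = delta w + 1 := by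
  rw [← List.singleton_append, delta_append, add_comm]
  rfl

@[simp] lemma delta_cons_false (w : List Bool) : delta (false :: w) = delta w - 1 := by
  rw [← List.singleton_append, delta_append, add_comm]
  rfl

lemma delta_reverse (w : List Bool) : delta w.reverse = delta w := by
  simp [delta, countA, countB, List.filter_reverse]

lemma heightsAux_append (x y : List Bool) (h : ℤ) :
    heightsAux (x ++ y) h = heightsAux x h ++ heightsAux y (h + delta x) := by
  induction x generalizing h with
  | nil => simp [heightsAux]
  | cons b x ih =>
    cases b <;> simp only [List.cons_append, heightsAux, ih, delta_cons_true, delta_cons_false]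
      <;> ring_nf

lemma heightsAux_reverse (w : List Bool) (h h' : ℤ) :
    heightsAux w.reverse h = ((heightsAux w h').map (h + h' + delta w - 1 - ·)).reverse := by
  induction w generalizing h' with
  | nil => rfl
  | cons b w ih =>
    rw [List.reverse_cons, heightsAux_append]
    cases b
    · simp only [heightsAux, ih (h' - 1), delta_cons_false, List.append_nil]
      congr; funext x; ring
    · simp only [heightsAux, ih (h' + 1), delta_cons_true, delta_reverse, List.map_cons,
        List.reverse_cons]
      congr 2
      · congr; funext x; ring
      · ring

def dinvRel (x y : ℤ) : Prop := x = y ∨ y = x - 1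

instance : DecidableRel dinvRel := fun x y => inferInstanceAs (Decidable (x = y ∨ y = x - 1))

lemma dinv_eq_pairCount (w : List Bool) : dinv w = pairCount dinvRel (heights w) :=
  card_filter_lt_getD_eq_pairCount (R := dinvRel) (heights w) 0

lemma dinvRel_sub_sub_iff (k x y : ℤ) : dinvRel (k - y) (k - x) ↔ dinvRel x y := by
  unfold dinvRel; omega

lemma dinvRel_add_one_sub_sub_iff (k x y : ℤ) : dinvRel (k + 1 - x) (k - y) ↔ dinvRel x y := by
  unfold dinvRel; omega

lemma pairCount_dinvRel_reverse_append_reverse (A B : List ℤ) (c : ℤ) :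
    pairCount dinvRel ((A.map (c + 1 - ·)).reverse ++ (B.map (c - ·)).reverse) =
      pairCount dinvRel (A ++ B) := by
  simp only [pairCount_append, pairCount_reverse, pairCount_map, crossCount_reverse, crossCount_map]
  rw [pairCount_congr (dinvRel_sub_sub_iff (c + 1)),
    crossCount_congr (dinvRel_add_one_sub_sub_iff c), pairCount_congr (dinvRel_sub_sub_iff c)]

theorem dinv_reverse_append_reverse {u v : List Bool} (h : delta (u ++ v) = -1) :
    dinv (u.reverse ++ v.reverse) = dinv (u ++ v) := by
  rw [delta_append] at h
  have hu : heightsAux u.reverse 0 = ((heightsAux u 0).map (delta u - 2 + 1 - ·)).reverse := by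
    rw [heightsAux_reverse u 0 0]; congr; funext x; ring
  have hv : heightsAux v.reverse (delta u) =
      ((heightsAux v (delta u)).map (delta u - 2 - ·)).reverse := by
    rw [heightsAux_reverse v _ (delta u)]; congr; funext x; omega
  rw [dinv_eq_pairCount, dinv_eq_pairCount, heights, heights, heightsAux_append,
    heightsAux_append, delta_reverse, zero_add, hu, hv, pairCount_dinvRel_reverse_append_reverse]

lemma inDn.eq_nil_or_delta_eq_neg_one {n : ℕ} {w : List Bool} (hw : inDn n w) :
    w = [] ∨ delta w = -1 := by
  obtain ⟨hA, hB, -⟩ := hw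
  cases n with
  | zero =>
    left
    cases w with
    | nil => rfl
    | cons b w => cases b <;> simp [countA, countB] at hA hB
  | succ k => right; simp [delta, hA, hB]

theorem stmt18_general (n : ℕ) (w u v : List Bool) (hw : w = u ++ v) (hin : inDn n w) :
    dinv (u.reverse ++ v.reverse) = dinv w := by
  subst hw
  rcases hin.eq_nil_or_delta_eq_neg_one with h | h
  · obtain ⟨rfl, rfl⟩ := List.append_eq_nil_iff.mp h
    rfl
  · exact dinv_reverse_append_reverse h

theorem stmt18 (n : ℕ) (w u v : List Bool) (hw : w = u ++ v) (hin : inDn n w)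
    (hmax : ∀ u' v' : List Bool, w = u' ++ v' →
      delta u' ≤ delta u ∧ (delta u' = delta u → u'.length ≤ u.length)) :
    dinv (u.reverse ++ v.reverse) = dinv w :=
  stmt18_general n w u v hw hin
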